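/- Let A ⊆ B be differential integral domains of characteristic zero with B integral over A and A integrally closed in its fraction field. Then the inclusion has the going-down property for prime differential ideals: if 𝔭₁ ⊆ 𝔭₂ are prime differential ideals of A and 𝔮₂ is a prime differential ideal of B with 𝔮₂ ∩ A = 𝔭₂, then there exists a prime differential ideal 𝔮₁ ⊆ 𝔮₂ of B with 𝔮₁ ∩ A = 𝔭₁. -/

import Mathlib

/-!
Extend `𝔭₁` to the differential ideal `𝔭₁B` and take a minimal prime `𝔮₁` over it inside `𝔮₂`.
In a ℚ-algebra radicals of differential ideals are differential (the Keigher property), and then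
so are the minimal primes over them, since `s * x ∈ √I` with `s ∉ 𝔮₁` forces `s * d x ∈ √I`.
Classical going-down (available because `A` is integrally closed) produces a prime inside `𝔮₁`
lying over `𝔭₁`; it contains `𝔭₁B`, so by minimality it is `𝔮₁` itself.
-/

/-- A derivation on a commutative ring, as a predicate. -/
def IsDerivationFn {R : Type*} [CommRing R] (d : R → R) : Prop :=
  (∀ a b : R, d (a + b) = d a + d b) ∧ (∀ a b : R, d (a * b) = a * d b + d a * b)

/-- A differential ideal: an ideal stable under the derivation. -/
def IsDiffIdeal {R : Type*} [CommRing R] (d : R → R) (I : Ideal R) : Prop :=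
  ∀ x ∈ I, d x ∈ I

/-- A Keigher ring: the radical of every differential ideal is differential. -/
def IsKeigher {R : Type*} [CommRing R] (d : R → R) : Prop :=
  IsDerivationFn d ∧ ∀ I : Ideal R, IsDiffIdeal d I → IsDiffIdeal d I.radical

section Derivation

variable {R : Type*} [CommRing R] {d : R → R}

theorem IsDerivationFn.map_zero (hd : IsDerivationFn d) : d 0 = 0 := by
  simpa using hd.1 0 0

theorem IsDerivationFn.map_pow_succ (hd : IsDerivationFn d) (x : R) (m : ℕ) :
    d (x ^ (m + 1)) = ((m + 1 : ℕ) : R) * x ^ m * d x := by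
  induction m with
  | zero => simp
  | succ m ih =>
    rw [pow_succ', hd.2, ih]
    push_cast
    ring

theorem Ideal.mem_of_natCast_mul_mem [Algebra ℚ R] {I : Ideal R} {n : ℕ} (hn : n ≠ 0) {z : R}
    (h : (n : R) * z ∈ I) : z ∈ I := by
  have hunit : IsUnit (n : R) := by
    simpa using (IsUnit.mk0 (n : ℚ) (Nat.cast_ne_zero.mpr hn)).map (algebraMap ℚ R)
  exact (I.unit_mul_mem_iff_mem hunit).mp h

/-- Differentiating `x ^ (j + 1) * d x ^ (2 * k + 1)` trades one factor `x` for two factors `d x`,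
up to a multiple of the element itself and a nonzero integer factor. -/
theorem IsDiffIdeal.pow_mul_deriv_pow_mem [Algebra ℚ R] (hd : IsDerivationFn d) {I : Ideal R}
    (hI : IsDiffIdeal d I) {x : R} {m : ℕ} (hx : x ^ (m + 1) ∈ I) :
    ∀ k j : ℕ, j + k = m → x ^ j * d x ^ (2 * k + 1) ∈ I := by
  intro k
  induction k with
  | zero =>
    rintro j rfl
    have h : ((j + 1 : ℕ) : R) * (x ^ j * d x) ∈ I := by
      rw [← mul_assoc, ← hd.map_pow_succ]
      exact hI _ hx
    simpa using I.mem_of_natCast_mul_mem (Nat.succ_ne_zero j) h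
  | succ k ih =>
    intro j hj
    set y := x ^ (j + 1) * d x ^ (2 * k + 1)
    have hy : y ∈ I := ih (j + 1) (by omega)
    have key : d y * d x - ((2 * k + 1 : ℕ) : R) * (y * d (d x))
        = ((j + 1 : ℕ) : R) * (x ^ j * d x ^ (2 * (k + 1) + 1)) := by
      rw [hd.2, hd.map_pow_succ, hd.map_pow_succ]
      push_cast
      ring
    have h : d y * d x - ((2 * k + 1 : ℕ) : R) * (y * d (d x)) ∈ I :=
      I.sub_mem (I.mul_mem_right _ (hI y hy)) (I.mul_mem_left _ (I.mul_mem_right _ hy))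
    rw [key] at h
    exact I.mem_of_natCast_mul_mem (Nat.succ_ne_zero j) h

theorem isKeigher_of_algebraRat [Algebra ℚ R] (hd : IsDerivationFn d) : IsKeigher d := by
  refine ⟨hd, fun I hI x hx => ?_⟩
  obtain ⟨n, hn⟩ := Ideal.mem_radical_iff.mp hx
  cases n with
  | zero =>
    rw [(Ideal.eq_top_iff_one I).mpr (by simpa using hn)]
    exact Ideal.le_radical Submodule.mem_top
  | succ m =>
    exact ⟨2 * m + 1, by simpa using hI.pow_mul_deriv_pow_mem hd hn m 0 (zero_add m)⟩

theorem IsDiffIdeal.mul_deriv_mem (hd : IsDerivationFn d) {J : Ideal R} (hJ : IsDiffIdeal d J)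
    (hJrad : J.IsRadical) {u v : R} (huv : u * v ∈ J) : u * d v ∈ J := by
  have h : (u * d v) ^ 2 = u * d v * d (u * v) - u * v * (d u * d v) := by
    rw [hd.2]
    ring
  apply hJrad ⟨2, _⟩
  rw [h]
  exact J.sub_mem (J.mul_mem_left _ (hJ _ huv)) (J.mul_mem_right _ huv)

theorem Ideal.exists_mul_mem_radical_of_mem_minimalPrimes {I p : Ideal R}
    (hp : p ∈ I.minimalPrimes) {x : R} (hx : x ∈ p) : ∃ s ∉ p, s * x ∈ I.radical := by
  have := hp.isPrime
  by_contra! hcon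
  let M := p.primeCompl ⊔ Submonoid.powers x
  have hdisj : Disjoint (I : Set R) M := by
    rw [Set.disjoint_right]
    intro b hb hbI
    obtain ⟨s, hs, _, ⟨n, rfl⟩, rfl⟩ := Submonoid.mem_sup.mp hb
    refine hcon s hs ⟨n + 1, ?_⟩
    rw [show (s * x) ^ (n + 1) = s * x ^ n * (s ^ n * x) by ring]
    exact I.mul_mem_right _ hbI
  obtain ⟨q, hq, hIq, hqM⟩ := I.exists_le_prime_disjoint M hdisj
  have hqp : q ≤ p := fun z hz => by
    by_contra hzp
    exact Set.disjoint_left.mp hqM hz (Submonoid.mem_sup_left hzp)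
  exact Set.disjoint_left.mp hqM (hp.2 ⟨hq, hIq⟩ hqp hx)
    (Submonoid.mem_sup_right (Submonoid.mem_powers x))

theorem IsKeigher.isDiffIdeal_of_mem_minimalPrimes (hd : IsKeigher d) {I p : Ideal R}
    (hI : IsDiffIdeal d I) (hp : p ∈ I.minimalPrimes) : IsDiffIdeal d p := by
  intro x hx
  obtain ⟨s, hs, hsx⟩ := Ideal.exists_mul_mem_radical_of_mem_minimalPrimes hp hx
  have hsdx : s * d x ∈ I.radical :=
    (hd.2 I hI).mul_deriv_mem hd.1 I.radical_isRadical hsx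
  have hradp : I.radical ≤ p := hp.isPrime.radical_le_iff.mpr hp.1.2
  exact (hp.isPrime.mem_or_mem (hradp hsdx)).resolve_left hs

end Derivation

theorem IsDiffIdeal.map {A B : Type*} [CommRing A] [CommRing B] [Algebra A B]
    {dA : A → A} {dB : B → B} (hdB : IsDerivationFn dB)
    (hcompat : ∀ a : A, algebraMap A B (dA a) = dB (algebraMap A B a))
    {𝔭 : Ideal A} (h𝔭 : IsDiffIdeal dA 𝔭) :
    IsDiffIdeal dB (𝔭.map (algebraMap A B)) := by
  intro x hx
  induction hx using Submodule.span_induction with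
  | mem b hb =>
    obtain ⟨a, ha, rfl⟩ := hb
    rw [← hcompat]
    exact Ideal.mem_map_of_mem _ (h𝔭 a ha)
  | zero => rw [hdB.map_zero]; exact zero_mem _
  | add y z _ _ hy hz => rw [hdB.1]; exact add_mem hy hz
  | smul c y hy hdy =>
    rw [smul_eq_mul, hdB.2]
    exact add_mem (Ideal.mul_mem_left _ _ hdy) (Ideal.mul_mem_left _ _ hy)

theorem Ideal.comap_eq_of_mem_minimalPrimes_map {R S : Type*} [CommRing R] [CommRing S]
    [Algebra R S] [Algebra.HasGoingDown R S] {p : Ideal R} [p.IsPrime] {P : Ideal S}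
    (hP : P ∈ (p.map (algebraMap R S)).minimalPrimes) :
    P.comap (algebraMap R S) = p := by
  have := hP.isPrime
  have hpP : p ≤ P.under R := Ideal.map_le_iff_le_comap.mp hP.1.2
  obtain ⟨Q, hQP, hQ, hQp⟩ :=
    P.exists_ideal_le_liesOver_of_le (p := p) (q := P.under R) hpP
  have hPQ : P ≤ Q := hP.2 ⟨hQ, Ideal.map_le_iff_le_comap.mpr (hQp.over.le)⟩ hQP
  obtain rfl : Q = P := le_antisymm hQP hPQ
  exact hQp.over.symm

theorem Algebra.HasGoingDown.exists_isDiffIdeal_le_comap_eq {A B : Type*} [CommRing A]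
    [CommRing B] [Algebra A B] [Algebra.HasGoingDown A B] {dA : A → A} {dB : B → B}
    (hdB : IsKeigher dB) (hcompat : ∀ a : A, algebraMap A B (dA a) = dB (algebraMap A B a))
    {𝔭 : Ideal A} [𝔭.IsPrime] (h𝔭 : IsDiffIdeal dA 𝔭) {𝔮 : Ideal B} [𝔮.IsPrime]
    (hle : 𝔭 ≤ 𝔮.comap (algebraMap A B)) :
    ∃ 𝔮' : Ideal B, 𝔮'.IsPrime ∧ IsDiffIdeal dB 𝔮' ∧ 𝔮' ≤ 𝔮 ∧
      𝔮'.comap (algebraMap A B) = 𝔭 := by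
  obtain ⟨𝔮', hmin, h𝔮'𝔮⟩ := Ideal.exists_minimalPrimes_le (Ideal.map_le_iff_le_comap.mpr hle)
  exact ⟨𝔮', hmin.isPrime, hdB.isDiffIdeal_of_mem_minimalPrimes (h𝔭.map hdB.1 hcompat) hmin,
    h𝔮'𝔮, Ideal.comap_eq_of_mem_minimalPrimes_map hmin⟩

theorem going_down_diff_integral_general
    {A B : Type*} [CommRing A] [CommRing B] [IsDomain B]
    [Algebra ℚ B] [Algebra A B] [Algebra.IsIntegral A B]
    [IsIntegrallyClosed A]
    (hinj : Function.Injective (algebraMap A B))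
    (dA : A → A) (dB : B → B) (hdB : IsDerivationFn dB)
    (hcompat : ∀ a : A, algebraMap A B (dA a) = dB (algebraMap A B a))
    (𝔭₁ 𝔭₂ : Ideal A) (h₁ : 𝔭₁.IsPrime) (h₁₂ : 𝔭₁ ≤ 𝔭₂)
    (h₁d : IsDiffIdeal dA 𝔭₁)
    (𝔮₂ : Ideal B) (hq₂ : 𝔮₂.IsPrime)
    (hover : Ideal.comap (algebraMap A B) 𝔮₂ = 𝔭₂) :
    ∃ 𝔮₁ : Ideal B, 𝔮₁.IsPrime ∧ IsDiffIdeal dB 𝔮₁ ∧ 𝔮₁ ≤ 𝔮₂ ∧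
      Ideal.comap (algebraMap A B) 𝔮₁ = 𝔭₁ := by
  have : FaithfulSMul A B := (faithfulSMul_iff_algebraMap_injective A B).mpr hinj
  exact Algebra.HasGoingDown.exists_isDiffIdeal_le_comap_eq (isKeigher_of_algebraRat hdB)
    hcompat h₁d (hover ▸ h₁₂)

/-- going-down for prime differential ideals along integral extensions with
integrally closed base, in characteristic zero. -/
theorem going_down_diff_integral
    {A B : Type*} [CommRing A] [CommRing B] [IsDomain A] [IsDomain B]
    [Algebra ℚ A] [Algebra ℚ B] [Algebra A B] [Algebra.IsIntegral A B]
    [IsIntegrallyClosed A]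
    (hinj : Function.Injective (algebraMap A B))
    (dA : A → A) (dB : B → B) (hdA : IsDerivationFn dA) (hdB : IsDerivationFn dB)
    (hcompat : ∀ a : A, algebraMap A B (dA a) = dB (algebraMap A B a))
    (𝔭₁ 𝔭₂ : Ideal A) (h₁ : 𝔭₁.IsPrime) (h₂ : 𝔭₂.IsPrime) (h₁₂ : 𝔭₁ ≤ 𝔭₂)
    (h₁d : IsDiffIdeal dA 𝔭₁) (h₂d : IsDiffIdeal dA 𝔭₂)
    (𝔮₂ : Ideal B) (hq₂ : 𝔮₂.IsPrime) (hq₂d : IsDiffIdeal dB 𝔮₂)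
    (hover : Ideal.comap (algebraMap A B) 𝔮₂ = 𝔭₂) :
    ∃ 𝔮₁ : Ideal B, 𝔮₁.IsPrime ∧ IsDiffIdeal dB 𝔮₁ ∧ 𝔮₁ ≤ 𝔮₂ ∧
      Ideal.comap (algebraMap A B) 𝔮₁ = 𝔭₁ :=
  going_down_diff_integral_general hinj dA dB hdB hcompat 𝔭₁ 𝔭₂ h₁ h₁₂ h₁d 𝔮₂ hq₂ hover
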